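/- Let $p \geq 2$ and suppose $\varrho: (0,\infty) \to [0,\infty)$ satisfies $\varrho(t)t - \varrho(s)s \geq \varrho_*[(t+s)^\delta(1+t+s)^{1-\delta}]^{p-2}(t-s)$ for all $t \geq s > 0$ with $\varrho_* > 0$ and $\delta \in [0,1]$. Then there exists $\alpha > 0$ such that for all $x, y \in \mathbb{R}^d$: $(\varrho(|x|)x - \varrho(|y|)y) \cdot (x - y) \geq \alpha |x - y|^p$. -/

import Mathlib

/-!
Put `t = ‖x‖ ≥ s = ‖y‖`. The pairing splits into a radial and an angular part,
`(ϱ(t) t - ϱ(s) s)(t - s) + (ϱ(t) + ϱ(s))(t s - ⟪x, y⟫)`, while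
`‖x - y‖² = (t - s)² + 2 (t s - ⟪x, y⟫)`. Since `(t + s)^δ (1 + t + s)^(1-δ) ≥ t + s`, the growth
condition bounds the radial part below by `ϱ_* (t + s)^(p-2) (t - s)²`; taken at `s = t / 2` it
also gives `ϱ(t) ≥ ϱ_* t^(p-2) / 2 ≥ 2^(1-p) ϱ_* (t + s)^(p-2)`, which controls the angular part.
So the pairing is at least `2^(-p) ϱ_* (t + s)^(p-2) ‖x - y‖² ≥ 2^(-p) ϱ_* ‖x - y‖^p`, because
`‖x - y‖ ≤ t + s`. Extending `ϱ` by `0` at the origin turns the field into `x ↦ ϱ(‖x‖) • x`.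
-/

open Real Set

lemma le_rpow_mul_one_add_rpow_one_sub {u δ : ℝ} (hu : 0 ≤ u) (hδ : δ ∈ Icc (0:ℝ) 1) :
    u ≤ u ^ δ * (1 + u) ^ (1 - δ) :=
  calc u = u ^ δ * u ^ (1 - δ) := by rw [← rpow_add' hu (by norm_num)]; norm_num
    _ ≤ u ^ δ * (1 + u) ^ (1 - δ) := by gcongr <;> linarith [hδ.2]

lemma rpow_le_rpow_sub_two_mul_sq {r R p : ℝ} (hr : 0 ≤ r) (hrR : r ≤ R) (hp : 2 ≤ p) :
    r ^ p ≤ R ^ (p - 2) * r ^ 2 :=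
  calc r ^ p = r ^ (p - 2) * r ^ (2:ℝ) := by rw [← rpow_add' hr (by linarith)]; norm_num
    _ ≤ R ^ (p - 2) * r ^ 2 := by
      rw [rpow_two]
      gcongr

section InnerProductSpace

variable {E : Type*} [NormedAddCommGroup E] [InnerProductSpace ℝ E]

lemma inner_smul_sub_smul_sub (a b : ℝ) (x y : E) :
    inner ℝ (a • x - b • y) (x - y) =
      (a * ‖x‖ - b * ‖y‖) * (‖x‖ - ‖y‖) + (a + b) * (‖x‖ * ‖y‖ - inner ℝ x y) := by
  simp only [inner_sub_left, inner_sub_right, real_inner_smul_left, real_inner_self_eq_norm_sq,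
    real_inner_comm x y]
  ring

lemma mul_norm_sub_sq_le_inner_smul_sub_smul {k a b : ℝ} {x y : E} (hb : 0 ≤ b)
    (hyx : ‖y‖ ≤ ‖x‖) (hk : k * (‖x‖ - ‖y‖) ≤ a * ‖x‖ - b * ‖y‖) (hka : 2 * k ≤ a) :
    k * ‖x - y‖ ^ 2 ≤ inner ℝ (a • x - b • y) (x - y) := by
  have hcos : 0 ≤ ‖x‖ * ‖y‖ - inner ℝ x y := sub_nonneg.2 (real_inner_le_norm x y)
  have hradial := mul_le_mul_of_nonneg_right hk (sub_nonneg.2 hyx)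
  have hangular := mul_le_mul_of_nonneg_right (show 2 * k ≤ a + b by linarith) hcos
  rw [inner_smul_sub_smul_sub, norm_sub_sq_real]
  linarith

lemma mul_norm_sub_rpow_le_inner_smul_sub_smul {w : ℝ → ℝ} {α p : ℝ} (hα : 0 ≤ α) (hp : 2 ≤ p)
    (hw : ∀ s, 0 ≤ s → 0 ≤ w s)
    (hwt : ∀ s t, 0 ≤ s → s ≤ t → 0 < t → 2 * (α * (t + s) ^ (p - 2)) ≤ w t)
    (hwts : ∀ s t, 0 ≤ s → s ≤ t → 0 < t →
      α * (t + s) ^ (p - 2) * (t - s) ≤ w t * t - w s * s)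
    (x y : E) :
    α * ‖x - y‖ ^ p ≤ inner ℝ (w ‖x‖ • x - w ‖y‖ • y) (x - y) := by
  wlog hyx : ‖y‖ ≤ ‖x‖ generalizing x y
  · have := this y x (le_of_not_ge hyx)
    rwa [norm_sub_rev, ← inner_neg_neg, neg_sub, neg_sub] at this
  rcases (norm_nonneg x).eq_or_lt with hx | hx
  · obtain rfl : x = 0 := norm_eq_zero.1 hx.symm
    obtain rfl : y = 0 := norm_le_zero_iff.1 (hx ▸ hyx)
    simp [zero_rpow (by linarith : p ≠ 0)]
  calc α * ‖x - y‖ ^ p ≤ α * ((‖x‖ + ‖y‖) ^ (p - 2) * ‖x - y‖ ^ 2) := by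
        gcongr
        exact rpow_le_rpow_sub_two_mul_sq (norm_nonneg _) (norm_sub_le x y) hp
    _ = α * (‖x‖ + ‖y‖) ^ (p - 2) * ‖x - y‖ ^ 2 := by ring
    _ ≤ inner ℝ (w ‖x‖ • x - w ‖y‖ • y) (x - y) :=
        mul_norm_sub_sq_le_inner_smul_sub_smul (hw _ (norm_nonneg y)) hyx
          (hwts _ _ (norm_nonneg y) hyx hx) (hwt _ _ (norm_nonneg y) hyx hx)

end InnerProductSpace

def IsClassPDelta (p δ c : ℝ) (ϱ : ℝ → ℝ) : Prop :=
  ∀ t s : ℝ, s ≤ t → 0 < s →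
    c * ((t + s) ^ δ * (1 + t + s) ^ (1 - δ)) ^ (p - 2) * (t - s) ≤ ϱ t * t - ϱ s * s

namespace IsClassPDelta

variable {p δ c : ℝ} {ϱ : ℝ → ℝ}

lemma mul_rpow_mul_sub_le (hϱ : IsClassPDelta p δ c ϱ) (hp : 2 ≤ p) (hδ : δ ∈ Icc (0:ℝ) 1)
    (hc : 0 ≤ c) {s t : ℝ} (hs : 0 < s) (hst : s ≤ t) :
    c * (t + s) ^ (p - 2) * (t - s) ≤ ϱ t * t - ϱ s * s := by
  refine le_trans ?_ (hϱ t s hst hs)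
  have hts : 0 ≤ t + s := by linarith
  have := le_rpow_mul_one_add_rpow_one_sub hts hδ
  rw [← add_assoc] at this
  gcongr

lemma half_mul_rpow_le (hϱ : IsClassPDelta p δ c ϱ) (hp : 2 ≤ p) (hδ : δ ∈ Icc (0:ℝ) 1)
    (hc : 0 ≤ c) (hnonneg : ∀ t, 0 < t → 0 ≤ ϱ t) {t : ℝ} (ht : 0 < t) :
    c / 2 * t ^ (p - 2) ≤ ϱ t := by
  have h := hϱ.mul_rpow_mul_sub_le hp hδ hc (half_pos ht) (half_le_self ht.le)
  have hmono : t ^ (p - 2) ≤ (t + t / 2) ^ (p - 2) := by gcongr; linarith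
  have hhalf := hnonneg _ (half_pos ht)
  have : c / 2 * t ^ (p - 2) * t ≤ ϱ t * t := by nlinarith [mul_le_mul_of_nonneg_left hmono hc]
  exact le_of_mul_le_mul_right this ht

lemma two_mul_div_two_rpow_mul_rpow_le (hϱ : IsClassPDelta p δ c ϱ) (hp : 2 ≤ p)
    (hδ : δ ∈ Icc (0:ℝ) 1) (hc : 0 ≤ c) (hnonneg : ∀ t, 0 < t → 0 ≤ ϱ t) {s t : ℝ}
    (hs : 0 ≤ s) (hst : s ≤ t) (ht : 0 < t) :
    2 * (c / 2 ^ p * (t + s) ^ (p - 2)) ≤ ϱ t := by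
  have hsum : (t + s) ^ (p - 2) ≤ 2 ^ (p - 2) * t ^ (p - 2) := by
    rw [← mul_rpow zero_le_two ht.le]
    gcongr; linarith
  have htwo : (2:ℝ) ^ p = 2 ^ (p - 2) * 4 := by
    rw [rpow_sub zero_lt_two, rpow_two]; norm_num
  calc 2 * (c / 2 ^ p * (t + s) ^ (p - 2))
      ≤ 2 * (c / 2 ^ p * (2 ^ (p - 2) * t ^ (p - 2))) := by gcongr
    _ = c / 2 * t ^ (p - 2) := by rw [htwo]; field_simp; ring
    _ ≤ ϱ t := hϱ.half_mul_rpow_le hp hδ hc hnonneg ht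

lemma div_two_rpow_mul_rpow_mul_sub_le_update (hϱ : IsClassPDelta p δ c ϱ) (hp : 2 ≤ p)
    (hδ : δ ∈ Icc (0:ℝ) 1) (hc : 0 ≤ c) (hnonneg : ∀ t, 0 < t → 0 ≤ ϱ t) {s t : ℝ}
    (hs : 0 ≤ s) (hst : s ≤ t) (ht : 0 < t) :
    c / 2 ^ p * (t + s) ^ (p - 2) * (t - s) ≤
      Function.update ϱ 0 0 t * t - Function.update ϱ 0 0 s * s := by
  rw [Function.update_of_ne ht.ne']
  rcases hs.eq_or_lt with rfl | hs
  · have h := hϱ.two_mul_div_two_rpow_mul_rpow_le hp hδ hc hnonneg le_rfl ht.le ht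
    have hM : 0 ≤ c / 2 ^ p * (t + 0) ^ (p - 2) := by positivity
    nlinarith
  · rw [Function.update_of_ne hs.ne']
    refine le_trans ?_ (hϱ.mul_rpow_mul_sub_le hp hδ hc hs hst)
    have : c / 2 ^ p ≤ c := div_le_self hc (one_le_rpow one_le_two (by linarith))
    gcongr

end IsClassPDelta

open Classical in
theorem nonlinearity_uniform_monotonicity (p δ : ℝ) (hp : 2 ≤ p)
    (hδ : δ ∈ Set.Icc (0:ℝ) 1) (d : ℕ)
    (ϱ : ℝ → ℝ) (ϱstar : ℝ) (hϱstar : 0 < ϱstar)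
    (hnonneg : ∀ t : ℝ, 0 < t → 0 ≤ ϱ t)
    (hmono : ∀ t s : ℝ, s ≤ t → 0 < s →
      ϱstar * ((t + s) ^ δ * (1 + t + s) ^ (1 - δ)) ^ (p - 2) * (t - s) ≤
        ϱ t * t - ϱ s * s) :
    ∃ α > 0, ∀ x y : EuclideanSpace ℝ (Fin d),
      α * ‖x - y‖ ^ p ≤
        (inner ℝ ((if x = 0 then 0 else ϱ ‖x‖ • x) - (if y = 0 then 0 else ϱ ‖y‖ • y))
          (x - y) : ℝ) := by
  have hϱ : IsClassPDelta p δ ϱstar ϱ := hmono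
  have hradial (x : EuclideanSpace ℝ (Fin d)) :
      (if x = 0 then 0 else ϱ ‖x‖ • x) = Function.update ϱ 0 0 ‖x‖ • x := by
    by_cases hx : x = 0 <;> simp [hx]
  refine ⟨ϱstar / 2 ^ p, by positivity, fun x y => ?_⟩
  rw [hradial, hradial]
  refine mul_norm_sub_rpow_le_inner_smul_sub_smul (by positivity) hp ?_ ?_ ?_ x y
  · intro s hs
    rcases hs.eq_or_lt with rfl | hs
    · simp
    · rw [Function.update_of_ne hs.ne']
      exact hnonneg s hs
  · intro s t hs hst ht
    rw [Function.update_of_ne ht.ne']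
    exact hϱ.two_mul_div_two_rpow_mul_rpow_le hp hδ hϱstar.le hnonneg hs hst ht
  · intro s t hs hst ht
    exact hϱ.div_two_rpow_mul_rpow_mul_sub_le_update hp hδ hϱstar.le hnonneg hs hst ht
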